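/- arXiv:math/0103169 — 3 statements merged into one kernel-verified Lean document; each statement's English description precedes it below -/
import Mathlib

section
/- For coprime positive integers p and q with 0 < q < p, E(p,q) = E(p, p-q), where E denotes the Euclid complexity. -/
/-- Number of subtractions the subtractive Euclid algorithm takes to convert
the pair `(a, b)` into `(0, 1)`. -/
def euclidE : ℕ → ℕ → ℕ
  | 0, _ => 0
  | _ + 1, 0 => 0
  | a + 1, b + 1 =>
    if b + 1 ≤ a + 1 then 1 + euclidE (a - b) (b + 1)
    else 1 + euclidE (a + 1) (b - a)
termination_by a b => a + b
decreasing_by all_goals omega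

lemma euclidE_pos_pos (a b : ℕ) (ha : 0 < a) (hb : 0 < b) :
    euclidE a b = if b ≤ a then 1 + euclidE (a - b) b else 1 + euclidE a (b - a) := by
  obtain ⟨a, rfl⟩ := Nat.exists_eq_succ_of_ne_zero ha.ne'
  obtain ⟨b, rfl⟩ := Nat.exists_eq_succ_of_ne_zero hb.ne'
  rw [euclidE]
  simp [Nat.succ_sub_succ]

lemma euclidE_comm_aux (n : ℕ) : ∀ a b, a + b ≤ n → euclidE a b = euclidE b a := by
  induction n with
  | zero =>
    intro a b h
    obtain rfl : a = 0 := by omega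
    obtain rfl : b = 0 := by omega
    rfl
  | succ n ih =>
    intro a b hn
    rcases Nat.eq_zero_or_pos a with rfl | ha
    · cases b <;> simp [euclidE]
    rcases Nat.eq_zero_or_pos b with rfl | hb
    · cases a <;> simp [euclidE]
    rw [euclidE_pos_pos a b ha hb, euclidE_pos_pos b a hb ha]
    rcases lt_trichotomy a b with hab | rfl | hab
    · rw [if_neg (show ¬ b ≤ a by omega), if_pos (show a ≤ b by omega)]
      have := ih a (b - a) (by omega)
      omega
    · simp
    · rw [if_pos (show b ≤ a by omega), if_neg (show ¬ a ≤ b by omega)]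
      have := ih (a - b) b (by omega)
      omega

/-- For coprime positive integers `p`, `q` with `0 < q < p`,
one has `E(p,q) = E(p, p-q)`. -/
theorem euclidE_symm_complement (p q : ℕ) (hq : 0 < q) (hqp : q < p)
    (h : Nat.Coprime p q) : euclidE p q = euclidE p (p - q) := by
  rw [euclidE_pos_pos p q (by omega) hq, euclidE_pos_pos p (p - q) (by omega) (by omega),
    if_pos (show q ≤ p by omega), if_pos (show p - q ≤ p by omega)]
  have h2 : p - (p - q) = q := by omega
  rw [h2, euclidE_comm_aux (p + q) _ _ (by omega)]
end

section
/- Let 0 < q, r < p be integers with qr \equiv \pm 1 \pmod p. Then E(p,q) = E(p,r), where E denotes the Euclid complexity (sum of partial quotients of the continued fraction of p/q). -/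
/-!
Read the subtractive Euclid algorithm backwards: a coprime pair `(p, q)` with `p > q` is the
second column of `M = R · W · R`, where `W` is a word in `R = !![1, 1; 0, 1]` and
`L = !![1, 0; 1, 1]` of length `E(p, q) - 2`. Writing `M = !![a, p; c, q]`, `det M = 1` gives
`a q ≡ 1 (mod p)`. Anti-transposition (reflection in the anti-diagonal) fixes `R` and `L` and
reverses products, so it sends `M` to the matrix of the reversed word, whose second column is
`(p, a)`; hence `E(p, a) = E(p, q)`. The case `q r ≡ -1` reduces to this via `E(p, p - r) = E(p, r)`.
-/

theorem euclidE_zero_left (b : ℕ) : euclidE 0 b = 0 := by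
  rw [euclidE]

theorem euclidE_zero_right (a : ℕ) : euclidE a 0 = 0 := by
  cases a <;> rw [euclidE]

theorem euclidE_comm (a b : ℕ) : euclidE a b = euclidE b a := by
  fun_induction euclidE a b with
  | case1 b => rw [euclidE_zero_right]
  | case2 a => rw [euclidE_zero_left]
  | case3 a b hba ih =>
    rw [ih, euclidE]
    split_ifs with h
    · obtain rfl : a = b := by omega
      simp [euclidE_zero_left, euclidE_zero_right]
    · rfl
  | case4 a b hab ih =>
    rw [ih, euclidE, if_pos (by omega)]

theorem euclidE_add_left (x : ℕ) {y : ℕ} (hy : 0 < y) :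
    euclidE (x + y) y = euclidE x y + 1 := by
  obtain ⟨b, rfl⟩ := Nat.exists_eq_add_of_lt hy
  rw [show x + (0 + b + 1) = x + b + 1 by omega, euclidE, if_pos (by omega)]
  simp [Nat.add_comm 1]

theorem euclidE_add_right {x : ℕ} (hx : 0 < x) (y : ℕ) :
    euclidE x (x + y) = euclidE x y + 1 := by
  rw [euclidE_comm, add_comm, euclidE_add_left y hx, euclidE_comm]

theorem euclidE_self_sub {p q : ℕ} (hq : 0 < q) (hqp : q < p) :
    euclidE p (p - q) = euclidE p q := by
  obtain ⟨x, rfl⟩ : ∃ x, p = x + q := ⟨p - q, by omega⟩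
  rw [Nat.add_sub_cancel, euclidE_add_left x hq, add_comm, euclidE_add_left q (by omega),
    euclidE_comm]

open Matrix

/-- `true` is the step `(x, y) ↦ (x + y, y)`, undone by one subtraction of the algorithm. -/
def stepMatrix : Bool → Matrix (Fin 2) (Fin 2) ℕ
  | true => !![1, 1; 0, 1]
  | false => !![1, 0; 1, 1]

def wordMatrix (w : List Bool) : Matrix (Fin 2) (Fin 2) ℕ := (w.map stepMatrix).prod

def sternBrocot (w : List Bool) : Fin 2 → ℕ := wordMatrix w *ᵥ ![1, 1]

theorem sternBrocot_nil : sternBrocot [] = ![1, 1] := by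
  simp [sternBrocot, wordMatrix]

theorem sternBrocot_cons (s : Bool) (w : List Bool) :
    sternBrocot (s :: w) = stepMatrix s *ᵥ sternBrocot w := by
  rw [sternBrocot, wordMatrix, List.map_cons, List.prod_cons, ← mulVec_mulVec]
  rfl

theorem sternBrocot_true_cons (w : List Bool) :
    sternBrocot (true :: w) = ![sternBrocot w 0 + sternBrocot w 1, sternBrocot w 1] := by
  ext i; fin_cases i <;> simp [sternBrocot_cons, stepMatrix, mulVec, dotProduct, Fin.sum_univ_two]

theorem sternBrocot_false_cons (w : List Bool) :
    sternBrocot (false :: w) = ![sternBrocot w 0, sternBrocot w 0 + sternBrocot w 1] := by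
  ext i; fin_cases i <;> simp [sternBrocot_cons, stepMatrix, mulVec, dotProduct, Fin.sum_univ_two]

theorem sternBrocot_pos (w : List Bool) (i : Fin 2) : 0 < sternBrocot w i := by
  induction w generalizing i with
  | nil => fin_cases i <;> simp [sternBrocot_nil]
  | cons s w ih =>
    have := ih 0; have := ih 1
    cases s <;> fin_cases i <;> simp [sternBrocot_true_cons, sternBrocot_false_cons] <;> omega

theorem euclidE_sternBrocot (w : List Bool) :
    euclidE (sternBrocot w 0) (sternBrocot w 1) = w.length + 1 := by
  induction w with
  | nil => simp [sternBrocot_nil, euclidE]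
  | cons s w ih =>
    cases s
    · simp only [sternBrocot_false_cons, cons_val_zero, cons_val_one, List.length_cons]
      rw [euclidE_add_right (sternBrocot_pos w 0), ih]
    · simp only [sternBrocot_true_cons, cons_val_zero, cons_val_one, List.length_cons]
      rw [euclidE_add_left _ (sternBrocot_pos w 1), ih]

theorem exists_sternBrocot_eq {x y : ℕ} (hx : 0 < x) (hy : 0 < y) (hxy : Nat.Coprime x y) :
    ∃ w, sternBrocot w 0 = x ∧ sternBrocot w 1 = y := by
  induction h : x + y using Nat.strong_induction_on generalizing x y with
  | _ n ih =>
  rcases lt_trichotomy x y with hlt | rfl | hgt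
  · obtain ⟨w, hw0, hw1⟩ := ih (x + (y - x)) (by omega) hx (by omega)
      ((Nat.coprime_sub_self_right hlt.le).2 hxy) rfl
    exact ⟨false :: w, by simp [sternBrocot_false_cons, hw0, hw1]; omega⟩
  · obtain rfl := (Nat.coprime_self x).1 hxy
    exact ⟨[], by simp [sternBrocot_nil]⟩
  · obtain ⟨w, hw0, hw1⟩ := ih (x - y + y) (by omega) (by omega) hy
      ((Nat.coprime_sub_self_left hgt.le).2 hxy) rfl
    exact ⟨true :: w, by simp [sternBrocot_true_cons, hw0, hw1]; omega⟩

theorem wordMatrix_cons (s : Bool) (w : List Bool) :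
    wordMatrix (s :: w) = stepMatrix s * wordMatrix w := List.prod_cons

theorem wordMatrix_append (v w : List Bool) :
    wordMatrix (v ++ w) = wordMatrix v * wordMatrix w := by
  simp [wordMatrix, List.prod_append]

theorem wordMatrix_append_true_apply_one (w : List Bool) (i : Fin 2) :
    wordMatrix (w ++ [true]) i 1 = sternBrocot w i := by
  rw [wordMatrix_append]
  simp [wordMatrix, sternBrocot, stepMatrix, mul_apply, mulVec, dotProduct,
    Fin.sum_univ_two]

theorem euclidE_wordMatrix_append_true (w : List Bool) :
    euclidE (wordMatrix (w ++ [true]) 0 1) (wordMatrix (w ++ [true]) 1 1) = w.length + 1 := by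
  simp only [wordMatrix_append_true_apply_one, euclidE_sternBrocot]

theorem det_wordMatrix (w : List Bool) : ((wordMatrix w).map (Nat.castRingHom ℤ)).det = 1 := by
  induction w with
  | nil => simp [wordMatrix]
  | cons s w ih =>
    rw [wordMatrix_cons, Matrix.map_mul, det_mul, ih, mul_one]
    cases s <;> simp [stepMatrix, det_fin_two]

section AntiTranspose

variable {n : ℕ} {α : Type*}

def antiTranspose (M : Matrix (Fin n) (Fin n) α) : Matrix (Fin n) (Fin n) α :=
  Mᵀ.submatrix Fin.rev Fin.rev

@[simp]
theorem antiTranspose_apply (M : Matrix (Fin n) (Fin n) α) (i j : Fin n) :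
    antiTranspose M i j = M j.rev i.rev := rfl

theorem antiTranspose_one [Zero α] [One α] :
    antiTranspose (1 : Matrix (Fin n) (Fin n) α) = 1 := by
  ext i j
  simp [one_apply, eq_comm]

theorem antiTranspose_mul [CommSemiring α] (M N : Matrix (Fin n) (Fin n) α) :
    antiTranspose (M * N) = antiTranspose N * antiTranspose M := by
  rw [antiTranspose, transpose_mul]
  exact (submatrix_mul_equiv _ _ Fin.revPerm Fin.revPerm Fin.revPerm).symm

end AntiTranspose

theorem antiTranspose_stepMatrix (s : Bool) : antiTranspose (stepMatrix s) = stepMatrix s := by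
  cases s <;> ext i j <;> fin_cases i <;> fin_cases j <;> rfl

theorem wordMatrix_reverse (w : List Bool) :
    wordMatrix w.reverse = antiTranspose (wordMatrix w) := by
  induction w with
  | nil => exact antiTranspose_one.symm
  | cons s w ih =>
    rw [List.reverse_cons, wordMatrix_append, ih, wordMatrix_cons s w, antiTranspose_mul,
      antiTranspose_stepMatrix]
    simp [wordMatrix]

theorem exists_inv_euclidE_eq {p q : ℕ} (hq : 0 < q) (hqp : q < p) (hpq : Nat.Coprime p q) :
    ∃ a < p, (a * q : ℤ) ≡ 1 [ZMOD p] ∧ euclidE p a = euclidE p q := by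
  obtain ⟨u, hu0, hu1⟩ :=
    exists_sternBrocot_eq (by omega) hq ((Nat.coprime_sub_self_left hqp.le).2 hpq)
  have hcol := wordMatrix_append_true_apply_one (true :: u)
  have hcol' := wordMatrix_append_true_apply_one (true :: u.reverse)
  have hE := euclidE_wordMatrix_append_true (true :: u)
  have hE' := euclidE_wordMatrix_append_true (true :: u.reverse)
  have hdet := det_wordMatrix ((true :: u) ++ [true])
  rw [show (true :: u.reverse) ++ [true] = ((true :: u) ++ [true]).reverse by simp,
    wordMatrix_reverse] at hcol' hE'
  generalize wordMatrix ((true :: u) ++ [true]) = M at *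
  simp only [Fin.forall_fin_two, sternBrocot_true_cons, antiTranspose_apply, Fin.isValue,
    Fin.reduceRev, cons_val_zero, cons_val_one, hu0, hu1, Nat.sub_add_cancel hqp.le,
    List.length_cons, List.length_reverse] at hcol hcol' hE hE'
  obtain ⟨hMp, hMq⟩ := hcol
  obtain ⟨hMp', hMa⟩ := hcol'
  rw [det_fin_two] at hdet
  simp only [map_apply, eq_natCast] at hdet
  refine ⟨M 0 0, ?_, ?_, ?_⟩
  · have := sternBrocot_pos u.reverse 0
    omega
  · refine Int.modEq_iff_dvd.2 ⟨-M 1 0, ?_⟩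
    rw [← hMp, ← hMq]
    linarith
  · rw [← hMp, ← hMq, hE, hE']

theorem euclidE_eq_of_mul_modEq_one {p q r : ℕ} (hq : 0 < q) (hqp : q < p) (hrp : r < p)
    (h : (q * r : ℤ) ≡ 1 [ZMOD p]) : euclidE p q = euclidE p r := by
  have hpq : Nat.Coprime p q := by
    obtain ⟨k, hk⟩ := Int.modEq_iff_dvd.1 h
    exact Nat.isCoprime_iff_coprime.1 ⟨k, r, by linarith⟩
  obtain ⟨a, hap, ha, hE⟩ := exists_inv_euclidE_eq hq hqp hpq
  have hra : (r : ℤ) ≡ a [ZMOD p] := calc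
    (r : ℤ) = 1 * r := (one_mul _).symm
    _ ≡ a * q * r [ZMOD p] := ha.symm.mul_right _
    _ = a * (q * r) := by ring
    _ ≡ a * 1 [ZMOD p] := h.mul_left _
    _ = a := mul_one _
  rw [← hE, (Int.natCast_modEq_iff.1 hra).eq_of_lt_of_lt hrp hap]

/-- Theorem 3: if `0 < q, r < p` and `q·r ≡ ±1 (mod p)`,
then `E(p,q) = E(p,r)`. -/
theorem euclidE_eq_of_mul_congr_pm_one (p q r : ℕ) (hq : 0 < q) (hqp : q < p)
    (hr : 0 < r) (hrp : r < p)
    (h : (q * r : ℤ) ≡ 1 [ZMOD (p : ℤ)] ∨ (q * r : ℤ) ≡ -1 [ZMOD (p : ℤ)]) :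
    euclidE p q = euclidE p r := by
  rcases h with h | h
  · exact euclidE_eq_of_mul_modEq_one hq hqp hrp h
  · have h' : (q * (p - r : ℕ) : ℤ) ≡ 1 [ZMOD p] := calc
      (q * (p - r : ℕ) : ℤ) = p * q + -(q * r) := by rw [Nat.cast_sub hrp.le]; ring
      _ ≡ 0 + -(-1) [ZMOD p] := (Int.modEq_zero_iff_dvd.2 (dvd_mul_right _ _)).add h.neg
      _ = 1 := by norm_num
    rw [euclidE_eq_of_mul_modEq_one hq hqp (by omega) h', euclidE_self_sub hr hrp]
end

section
/- For any pair of coprime integers (p,q) with p, q > 0, there exists exactly one admissible hexagon having (p,q) as a vertex that is most distant from the origin with respect to the quadratic form Q(x,y) = x^2 + xy + y^2. -/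
/-- `det2 u v` is the determinant of the pair `(u, v)` of lattice vectors. -/
def det2 (u v : ℤ × ℤ) : ℤ := u.1 * v.2 - u.2 * v.1

/-- A set `W ⊆ ℤ²` is an admissible hexagon if its vertex set is
`{v₁, v₂, v₃, -v₁, -v₂, -v₃}` where `v₂ = v₁ + v₃` and any two nonopposite
vertices span a parallelogram of area 1. -/
def IsAdmissibleHexagon (W : Set (ℤ × ℤ)) : Prop :=
  ∃ v₁ v₂ v₃ : ℤ × ℤ,
    v₂ = v₁ + v₃ ∧
    |det2 v₁ v₂| = 1 ∧ |det2 v₂ v₃| = 1 ∧ |det2 v₁ v₃| = 1 ∧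
    W = {v₁, v₂, v₃, -v₁, -v₂, -v₃}

/-- The quadratic form `Q(x,y) = x² + xy + y²`. -/
def Qform (v : ℤ × ℤ) : ℤ := v.1 ^ 2 + v.1 * v.2 + v.2 ^ 2

lemma hex_normalize (W : Set (ℤ × ℤ)) (h : IsAdmissibleHexagon W) (P : ℤ × ℤ)
    (hP : P ∈ W) :
    ∃ u1 u3 : ℤ × ℤ, u1 + u3 = P ∧ |det2 u1 u3| = 1 ∧
      W = {u1, P, u3, -u1, -P, -u3} := by
  obtain ⟨v1, v2, v3, hsum, h12, h23, h13, hW⟩ := h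
  subst hsum
  subst hW
  simp only [Set.mem_insert_iff, Set.mem_singleton_iff] at hP
  have e1 : det2 (v1 + v3) (-v3) = -(det2 v1 v3) := by simp [det2]; ring
  have e2 : det2 (-v1) (v1 + v3) = -(det2 v1 v3) := by simp [det2]; ring
  have e3 : det2 (-(v1 + v3)) v3 = -(det2 v1 v3) := by simp [det2]; ring
  have e4 : det2 (-v1) (-v3) = det2 v1 v3 := by simp [det2]
  have e5 : det2 v1 (-(v1 + v3)) = -(det2 v1 v3) := by simp [det2]; ring
  rcases hP with h | h | h | h | h | h
  · refine ⟨v1 + v3, -v3, by rw [h]; abel, by rw [e1, abs_neg]; exact h13, ?_⟩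
    rw [h]; ext x
    simp only [Set.mem_insert_iff, Set.mem_singleton_iff, neg_neg]; tauto
  · exact ⟨v1, v3, h.symm, h13, by rw [h]⟩
  · refine ⟨-v1, v1 + v3, by rw [h]; abel, by rw [e2, abs_neg]; exact h13, ?_⟩
    rw [h]; ext x
    simp only [Set.mem_insert_iff, Set.mem_singleton_iff, neg_neg]; tauto
  · refine ⟨-(v1 + v3), v3, by rw [h]; abel, by rw [e3, abs_neg]; exact h13, ?_⟩
    rw [h]; ext x
    simp only [Set.mem_insert_iff, Set.mem_singleton_iff, neg_neg]; tauto
  · refine ⟨-v1, -v3, by rw [h]; abel, by rw [e4]; exact h13, ?_⟩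
    rw [h]; ext x
    simp only [Set.mem_insert_iff, Set.mem_singleton_iff, neg_neg]; tauto
  · refine ⟨v1, -(v1 + v3), by rw [h]; abel, by rw [e5, abs_neg]; exact h13, ?_⟩
    rw [h]; ext x
    simp only [Set.mem_insert_iff, Set.mem_singleton_iff, neg_neg]; tauto


lemma Qgrow (p q A B t : ℤ) (hp : 0 < p) (hq : 0 < q)
    (hA0 : 0 ≤ A) (hB0 : 0 ≤ B)
    (hQpos : 1 ≤ A ^ 2 + A * B + B ^ 2) (ht : 1 ≤ t) :
    p ^ 2 + p * q + q ^ 2 < (A + p * t) ^ 2 + (A + p * t) * (B + q * t) + (B + q * t) ^ 2 := by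
  have hM : 0 ≤ 2 * A * p + A * q + B * p + 2 * B * q := by
    have := mul_nonneg hA0 hp.le
    have := mul_nonneg hA0 hq.le
    have := mul_nonneg hB0 hp.le
    have := mul_nonneg hB0 hq.le
    nlinarith
  have h1 : 0 ≤ t * (2 * A * p + A * q + B * p + 2 * B * q) :=
    mul_nonneg (by linarith) hM
  have h2 : 0 ≤ (t ^ 2 - 1) * (p ^ 2 + p * q + q ^ 2) := by
    have ha : 0 ≤ t ^ 2 - 1 := by nlinarith
    have hb : 0 ≤ p ^ 2 + p * q + q ^ 2 := by nlinarith [mul_pos hp hq]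
    exact mul_nonneg ha hb
  nlinarith [h1, h2]

set_option maxHeartbeats 1000000 in
/-- For any pair of coprime positive integers `(p,q)` there exists exactly one
admissible hexagon having `(p,q)` as a vertex that is most distant from the
origin with respect to the quadratic form `Q(x,y) = x² + xy + y²`. -/
theorem existsUnique_admissible_hexagon_with_leading_vertex (p q : ℤ)
    (hp : 0 < p) (hq : 0 < q) (hpq : IsCoprime p q) :
    ∃! W : Set (ℤ × ℤ), IsAdmissibleHexagon W ∧ (p, q) ∈ W ∧
      ∀ v ∈ W, Qform v ≤ Qform (p, q) := by
  have hco := hpq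
  obtain ⟨x, y, hxy⟩ := hpq
  have hp0 : p ≠ 0 := hp.ne'
  obtain ⟨k, hk⟩ : ∃ k : ℤ, k = (y - 1) / p := ⟨_, rfl⟩
  obtain ⟨a, hadef⟩ : ∃ a : ℤ, a = y - p * k := ⟨_, rfl⟩
  obtain ⟨b, hbdef⟩ : ∃ b : ℤ, b = -x - q * k := ⟨_, rfl⟩
  have hab : a * q - b * p = 1 := by rw [hadef, hbdef]; ring_nf; linarith [hxy]
  have ha1 : 1 ≤ a := by
    have h1 := Int.emod_nonneg (y - 1) hp0
    rw [Int.emod_def] at h1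
    rw [hadef, hk]; linarith
  have ha2 : a ≤ p := by
    have h1 := Int.emod_lt_of_pos (y - 1) hp
    rw [Int.emod_def] at h1
    rw [hadef, hk]; linarith
  have hb0 : 0 ≤ b := by nlinarith
  have hb1 : b ≤ q - 1 := by nlinarith
  obtain ⟨c, hcdef⟩ : ∃ c : ℤ, c = p - a := ⟨_, rfl⟩
  obtain ⟨d, hddef⟩ : ∃ d : ℤ, d = q - b := ⟨_, rfl⟩
  have hc0 : 0 ≤ c := by omega
  have hc1 : c ≤ p - 1 := by omega
  have hd1 : 1 ≤ d := by omega
  have hd2 : d ≤ q := by omega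
  have hQpos1 : 1 ≤ a ^ 2 + a * b + b ^ 2 := by
    nlinarith [sq_nonneg (a - 1), mul_nonneg (show (0:ℤ) ≤ a by linarith) hb0, sq_nonneg b]
  have hQpos3 : 1 ≤ c ^ 2 + c * d + d ^ 2 := by
    nlinarith [sq_nonneg (d - 1), mul_nonneg hc0 (show (0:ℤ) ≤ d by linarith), sq_nonneg c]
  have hdet : det2 (a, b) (c, d) = 1 := by
    show a * d - b * c = 1
    rw [hcdef, hddef]; ring_nf; linarith [hab]
  have hdet1 : det2 (a, b) (p, q) = 1 := by show a * q - b * p = 1; exact hab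
  have hdet2 : det2 (p, q) (c, d) = 1 := by
    show p * d - q * c = 1
    rw [hcdef, hddef]; ring_nf; linarith [hab]
  have hsum : ((p, q) : ℤ × ℤ) = (a, b) + (c, d) := by
    rw [hcdef, hddef]; simp [Prod.ext_iff]
  have hQ1 : Qform (a, b) ≤ Qform (p, q) := by
    show a ^ 2 + a * b + b ^ 2 ≤ p ^ 2 + p * q + q ^ 2
    nlinarith
  have hQ3 : Qform (c, d) ≤ Qform (p, q) := by
    show c ^ 2 + c * d + d ^ 2 ≤ p ^ 2 + p * q + q ^ 2
    nlinarith
  refine ⟨{(a, b), (p, q), (c, d), -(a, b), -(p, q), -(c, d)},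
    ⟨⟨(a, b), (p, q), (c, d), hsum, by rw [hdet1]; rfl, by rw [hdet2]; rfl,
      by rw [hdet]; rfl, rfl⟩, by simp, ?_⟩, ?_⟩
  · intro v hv
    have hQn : ∀ w : ℤ × ℤ, Qform (-w) = Qform w := by
      intro w
      show (-w).1 ^ 2 + (-w).1 * (-w).2 + (-w).2 ^ 2 = w.1 ^ 2 + w.1 * w.2 + w.2 ^ 2
      simp only [Prod.fst_neg, Prod.snd_neg]; ring
    simp only [Set.mem_insert_iff, Set.mem_singleton_iff] at hv
    rcases hv with rfl | rfl | rfl | rfl | rfl | rfl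
    · exact hQ1
    · exact le_refl _
    · exact hQ3
    · rw [hQn]; exact hQ1
    · rw [hQn]
    · rw [hQn]; exact hQ3
  · rintro W' ⟨hhex, hmem, hmax⟩
    obtain ⟨u1, u3, husum, hudet, hW'⟩ := hex_normalize W' hhex (p, q) hmem
    obtain ⟨w1, w3, hwsum, hwdet, hW''⟩ :
        ∃ w1 w3 : ℤ × ℤ, w1 + w3 = (p, q) ∧ det2 w1 w3 = 1 ∧
          W' = {w1, (p, q), w3, -w1, -(p, q), -w3} := by
      rcases (abs_eq (by norm_num : (0:ℤ) ≤ 1)).mp hudet with h | h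
      · exact ⟨u1, u3, husum, h, hW'⟩
      · refine ⟨u3, u1, by rw [← husum]; abel, ?_, ?_⟩
        · have e : det2 u3 u1 = -(det2 u1 u3) := by simp [det2]; ring
          rw [e, h]; norm_num
        · rw [hW']; ext z
          simp only [Set.mem_insert_iff, Set.mem_singleton_iff]; tauto
    have h3a : w3.1 = p - w1.1 := by
      have h1 := congrArg Prod.fst hwsum; simp at h1; linarith
    have h3b : w3.2 = q - w1.2 := by
      have h1 := congrArg Prod.snd hwsum; simp at h1; linarith
    have key : w1.1 * q - w1.2 * p = 1 := by
      have e : det2 w1 w3 = w1.1 * w3.2 - w1.2 * w3.1 := rfl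
      rw [e, h3a, h3b] at hwdet
      linear_combination hwdet
    have hdvd : p ∣ (w1.1 - a) * q := ⟨w1.2 - b, by linear_combination key - hab⟩
    obtain ⟨t, ht⟩ := hco.dvd_of_dvd_mul_right hdvd
    have htb : w1.2 = b + q * t := by
      have h2 : p * (w1.2 - b) = p * (q * t) := by linear_combination q * ht - key + hab
      have h3 := mul_left_cancel₀ hp0 h2
      linarith
    have hta : w1.1 = a + p * t := by linarith [ht]
    have hq1 : Qform w1 ≤ Qform (p, q) := hmax w1 (by rw [hW'']; left; rfl)
    have hq3 : Qform w3 ≤ Qform (p, q) := by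
      refine hmax w3 ?_
      rw [hW'']
      simp only [Set.mem_insert_iff, Set.mem_singleton_iff]; tauto
    have hNq : Qform (p, q) = p ^ 2 + p * q + q ^ 2 := rfl
    have ht0 : t = 0 := by
      rcases lt_trichotomy t 0 with h | h | h
      · exfalso
        have h1 : t ≤ -1 := by omega
        have e3 : Qform w3 = (c + p * (-t)) ^ 2 + (c + p * (-t)) * (d + q * (-t)) + (d + q * (-t)) ^ 2 := by
          rw [Qform, h3a, h3b, hta, htb, hcdef, hddef]; ring
        rw [e3, hNq] at hq3
        exact absurd hq3 (not_le.mpr (Qgrow p q c d (-t) hp hq hc0 (by omega) hQpos3 (by omega)))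
      · exact h
      · exfalso
        have h1 : 1 ≤ t := h
        have e1 : Qform w1 = (a + p * t) ^ 2 + (a + p * t) * (b + q * t) + (b + q * t) ^ 2 := by
          rw [Qform, hta, htb]
        rw [e1, hNq] at hq1
        exact absurd hq1 (not_le.mpr (Qgrow p q a b t hp hq (by omega) hb0 hQpos1 h1))
    have hw1 : w1 = (a, b) := by
      have e1 : w1.1 = a := by rw [hta, ht0]; ring
      have e2 : w1.2 = b := by rw [htb, ht0]; ring
      exact Prod.ext e1 e2
    have hw3 : w3 = (c, d) := by
      have e1 : w3.1 = c := by rw [h3a, hw1, hcdef]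
      have e2 : w3.2 = d := by rw [h3b, hw1, hddef]
      exact Prod.ext e1 e2
    rw [hW'', hw1, hw3]
end
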